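/- arXiv:1703.10148 — 3 statements merged into one kernel-verified Lean document; each statement's English description precedes it below -/
import Mathlib

section
/- If forcings P and Q are sub-equivalent (P ≂ Q), then they are equivalent (P ≃ Q). -/
universe u v

/-- A subset `D` of a forcing (preorder) is dense if every condition has an extension in `D`. -/
def DenseSub {P : Type u} [Preorder P] (D : Set P) : Prop :=
  ∀ p : P, ∃ d ∈ D, d ≤ p

/-- A sub-isomorphism `ι : P → Q` is an order isomorphism of `P` onto a dense subset of `Q`:
it is injective, satisfies `p ≤ p' ↔ ι p ≤ ι p'`, and its range is dense in `Q`. -/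
structure IsSubIso {P : Type u} {Q : Type v} [Preorder P] [Preorder Q] (ι : P → Q) : Prop where
  inj : Function.Injective ι
  le_iff : ∀ p p' : P, p ≤ p' ↔ ι p ≤ ι p'
  dense : DenseSub (Set.range ι)

/-- `P` and `Q` are sub-equivalent if there are a forcing `R` and sub-isomorphisms
`R → P` and `R → Q`. -/
def SubEquiv (P Q : Type u) [Preorder P] [Preorder Q] : Prop :=
  ∃ (R : Type u) (instR : Preorder R) (f : R → P) (g : R → Q),
    @IsSubIso R P instR _ f ∧ @IsSubIso R Q instR _ g

/-- `P` and `Q` are equivalent if there are a forcing `S` and sub-isomorphisms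
`P → S` and `Q → S`. -/
def EquivForcing (P Q : Type u) [Preorder P] [Preorder Q] : Prop :=
  ∃ (S : Type u) (instS : Preorder S) (f : P → S) (g : Q → S),
    @IsSubIso P S _ instS f ∧ @IsSubIso Q S _ instS g

/-!
Glue `P` and `Q` along the common dense copy of `R`: on `P ⊕ Q` keep the orders of `P` and `Q`
and put `p ≤ q` (resp. `q ≤ p`) when `p ≤ f r` and `g r ≤ q` (resp. `q ≤ g r` and `f r ≤ p`)
for some `r`. Transitivity across the seam holds because `f` and `g` induce the same order on
`R`, and `P` is dense in the glued order because the range of `g` is dense in `Q` (and symmetrically).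
-/

-- A type synonym, so that the glued order does not clash with Mathlib's order on `P ⊕ Q`.
def GluedSum (P Q : Type*) : Type _ := P ⊕ Q

namespace GluedSum

variable {P Q R : Type*} [Preorder P] [Preorder Q] (f : R → P) (g : R → Q)

def le : GluedSum P Q → GluedSum P Q → Prop
  | .inl p, .inl p' => p ≤ p'
  | .inl p, .inr q => ∃ r, p ≤ f r ∧ g r ≤ q
  | .inr q, .inl p => ∃ r, q ≤ g r ∧ f r ≤ p
  | .inr q, .inr q' => q ≤ q'

variable {f g}

abbrev preorder (hfg : ∀ r r', f r ≤ f r' ↔ g r ≤ g r') : Preorder (GluedSum P Q) where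
  le := le f g
  le_refl := by rintro (p | q) <;> exact le_rfl
  le_trans := by
    rintro (p₁ | q₁) (p₂ | q₂) (p₃ | q₃) h₁₂ h₂₃
    · exact le_trans h₁₂ h₂₃
    · obtain ⟨r, hp, hq⟩ := h₂₃
      exact ⟨r, h₁₂.trans hp, hq⟩
    · obtain ⟨r, hp₁, hq₂⟩ := h₁₂
      obtain ⟨r', hq₂', hp₃⟩ := h₂₃
      exact hp₁.trans (((hfg r r').2 (hq₂.trans hq₂')).trans hp₃)
    · obtain ⟨r, hp, hq⟩ := h₁₂
      exact ⟨r, hp, hq.trans h₂₃⟩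
    · obtain ⟨r, hq, hp⟩ := h₁₂
      exact ⟨r, hq, hp.trans h₂₃⟩
    · obtain ⟨r, hq₁, hp₂⟩ := h₁₂
      obtain ⟨r', hp₂', hq₃⟩ := h₂₃
      exact hq₁.trans (((hfg r r').1 (hp₂.trans hp₂')).trans hq₃)
    · obtain ⟨r, hq, hp⟩ := h₂₃
      exact ⟨r, h₁₂.trans hq, hp⟩
    · exact le_trans h₁₂ h₂₃

theorem isSubIso_inl (hfg : ∀ r r', f r ≤ f r' ↔ g r ≤ g r') (hg : DenseSub (Set.range g)) :
    @IsSubIso P (GluedSum P Q) _ (preorder hfg) Sum.inl := by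
  let := preorder hfg
  refine ⟨Sum.inl_injective, fun _ _ => Iff.rfl, ?_⟩
  rintro (p | q)
  · exact ⟨Sum.inl p, ⟨p, rfl⟩, le_rfl⟩
  · obtain ⟨_, ⟨r, rfl⟩, hr⟩ := hg q
    exact ⟨Sum.inl (f r), ⟨f r, rfl⟩, r, le_rfl, hr⟩

theorem isSubIso_inr (hfg : ∀ r r', f r ≤ f r' ↔ g r ≤ g r') (hf : DenseSub (Set.range f)) :
    @IsSubIso Q (GluedSum P Q) _ (preorder hfg) Sum.inr := by
  let := preorder hfg
  refine ⟨Sum.inr_injective, fun _ _ => Iff.rfl, ?_⟩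
  rintro (p | q)
  · obtain ⟨_, ⟨r, rfl⟩, hr⟩ := hf p
    exact ⟨Sum.inr (g r), ⟨g r, rfl⟩, r, le_rfl, hr⟩
  · exact ⟨Sum.inr q, ⟨q, rfl⟩, le_rfl⟩

end GluedSum

/-- If the forcings `P` and `Q` are sub-equivalent, then they are equivalent. -/
theorem statement1 {P Q : Type u} [Preorder P] [Preorder Q] (h : SubEquiv P Q) :
    EquivForcing P Q := by
  obtain ⟨R, _, f, g, hf, hg⟩ := h
  have hfg : ∀ r r', f r ≤ f r' ↔ g r ≤ g r' := fun r r' =>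
    (hf.le_iff r r').symm.trans (hg.le_iff r r')
  exact ⟨GluedSum P Q, GluedSum.preorder hfg, Sum.inl, Sum.inr,
    GluedSum.isSubIso_inl hfg hg.dense, GluedSum.isSubIso_inr hfg hf.dense⟩
end

section
/- The relation ≃ of equivalence of forcings is transitive: if P ≃ Q and Q ≃ R, then P ≃ R. -/
universe u v

/-!
Transitivity is an amalgamation: given sub-isomorphisms `u : Q → S` and `v : Q → T`, order the
disjoint union `S ⊕ T` by keeping the orders of `S` and `T` and putting `s ≤ t` (resp. `t ≤ s`)
when the comparison factors through the image of some `q : Q`. Since `u` and `v` induce the same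
order on `Q`, this is transitive, and since both images of `Q` are dense, each summand is dense in
`S ⊕ T`. Sub-isomorphisms compose, so `P → S → S ⊕ T` and `R → T → S ⊕ T` witness `P ≃ R`.
-/

theorem IsSubIso.comp {A B C : Type*} [Preorder A] [Preorder B] [Preorder C]
    {f : A → B} {g : B → C} (hf : IsSubIso f) (hg : IsSubIso g) : IsSubIso (g ∘ f) where
  inj := hg.inj.comp hf.inj
  le_iff p p' := (hf.le_iff p p').trans (hg.le_iff _ _)
  dense c := by
    obtain ⟨_, ⟨b, rfl⟩, hb⟩ := hg.dense c
    obtain ⟨_, ⟨a, rfl⟩, ha⟩ := hf.dense b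
    exact ⟨g (f a), ⟨a, rfl⟩, ((hg.le_iff _ _).1 ha).trans hb⟩

section Amalgam

variable {Q S T : Type*}

/-- `S ⊕ T`, remembering `u` and `v` so that the amalgamated order can be an instance. -/
@[nolint unusedArguments]
def Amalgam (_u : Q → S) (_v : Q → T) : Type _ := S ⊕ T

def Amalgam.inl (u : Q → S) (v : Q → T) : S → Amalgam u v := Sum.inl

def Amalgam.inr (u : Q → S) (v : Q → T) : T → Amalgam u v := Sum.inr

variable [Preorder S] [Preorder T] (u : Q → S) (v : Q → T)

def amalgLE : Amalgam u v → Amalgam u v → Prop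
  | Sum.inl s, Sum.inl s' => s ≤ s'
  | Sum.inl s, Sum.inr t => ∃ q, s ≤ u q ∧ v q ≤ t
  | Sum.inr t, Sum.inl s => ∃ q, t ≤ v q ∧ u q ≤ s
  | Sum.inr t, Sum.inr t' => t ≤ t'

variable {u v}

instance [hc : Fact (∀ q q', u q ≤ u q' ↔ v q ≤ v q')] : Preorder (Amalgam u v) where
  le := amalgLE u v
  le_refl := by rintro (s | t) <;> exact le_rfl
  le_trans := by
    rintro (a | a) (b | b) (c | c) hab hbc <;> simp only [amalgLE] at *
    · exact hab.trans hbc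
    · obtain ⟨q, h₁, h₂⟩ := hbc; exact ⟨q, hab.trans h₁, h₂⟩
    · obtain ⟨q, h₁, h₂⟩ := hab
      obtain ⟨q', h₁', h₂'⟩ := hbc
      exact h₁.trans (((hc.out q q').2 (h₂.trans h₁')).trans h₂')
    · obtain ⟨q, h₁, h₂⟩ := hab; exact ⟨q, h₁, h₂.trans hbc⟩
    · obtain ⟨q, h₁, h₂⟩ := hab; exact ⟨q, h₁, h₂.trans hbc⟩
    · obtain ⟨q, h₁, h₂⟩ := hab
      obtain ⟨q', h₁', h₂'⟩ := hbc
      exact h₁.trans (((hc.out q q').1 (h₂.trans h₁')).trans h₂')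
    · obtain ⟨q, h₁, h₂⟩ := hbc; exact ⟨q, hab.trans h₁, h₂⟩
    · exact hab.trans hbc

variable [Fact (∀ q q', u q ≤ u q' ↔ v q ≤ v q')]

theorem isSubIso_inl_amalgam (hv : DenseSub (Set.range v)) :
    IsSubIso (Amalgam.inl u v) where
  inj := Sum.inl_injective
  le_iff _ _ := Iff.rfl
  dense := by
    rintro (s | t)
    · exact ⟨Sum.inl s, ⟨s, rfl⟩, le_refl s⟩
    · obtain ⟨_, ⟨q, rfl⟩, hq⟩ := hv t
      exact ⟨Sum.inl (u q), ⟨u q, rfl⟩, q, le_rfl, hq⟩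

theorem isSubIso_inr_amalgam (hu : DenseSub (Set.range u)) :
    IsSubIso (Amalgam.inr u v) where
  inj := Sum.inr_injective
  le_iff _ _ := Iff.rfl
  dense := by
    rintro (s | t)
    · obtain ⟨_, ⟨q, rfl⟩, hq⟩ := hu s
      exact ⟨Sum.inr (v q), ⟨v q, rfl⟩, q, le_rfl, hq⟩
    · exact ⟨Sum.inr t, ⟨t, rfl⟩, le_refl t⟩

end Amalgam

/-- The relation of equivalence of forcings is transitive. -/
theorem statement2 {P Q R : Type u} [Preorder P] [Preorder Q] [Preorder R]
    (h1 : EquivForcing P Q) (h2 : EquivForcing Q R) : EquivForcing P R := by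
  obtain ⟨S, instS, f, g, hf, hg⟩ := h1
  obtain ⟨T, instT, g', k, hg', hk⟩ := h2
  have : Fact (∀ q q', g q ≤ g q' ↔ g' q ≤ g' q') :=
    ⟨fun q q' => (hg.le_iff q q').symm.trans (hg'.le_iff q q')⟩
  exact ⟨Amalgam g g', inferInstance, Amalgam.inl g g' ∘ f, Amalgam.inr g g' ∘ k,
    hf.comp (isSubIso_inl_amalgam hg'.dense), hk.comp (isSubIso_inr_amalgam hg.dense)⟩
end

section
/- Let ν be an infinite regular cardinal with ν^{<ν} = ν and let t ∈ ν^{<ν}. A subset A of ν^ν is ν-comeager in N_t if and only if there is a dense continuous homomorphism f : ν^{<ν} → ν^{<ν} with f(∅) = t and ran(f*) ⊆ A. -/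
universe u

noncomputable section

/-! ## Sequences of ordinals

`SeqLT o v` is the set `v^{<o}` of all sequences of ordinals `< v` of length `< o`
(for `o > 0`; values beyond the length are normalized to `0`).
`SeqFull o v` is the generalized Baire space `v^o` of all functions from ordinals `< o`
to ordinals `< v`. -/

/-- An element of `v^{<o}`: a sequence of ordinals `< v` of length `< o`. -/
structure SeqLT (o v : Ordinal.{u}) : Type (u + 1) where
  len : Ordinal.{u}
  len_lt : len < o ⊔ 1
  val : Ordinal.{u} → Ordinal.{u}
  val_lt : ∀ β, β < len → val β < v
  val_zero : ∀ β, len ≤ β → val β = 0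

namespace SeqLT

variable {o v : Ordinal.{u}}

/-- `s ⊆ t`, i.e. `t` end-extends `s`. -/
protected def le (s t : SeqLT o v) : Prop :=
  s.len ≤ t.len ∧ ∀ β, β < s.len → s.val β = t.val β

/-- `s ⊊ t`, i.e. `t` properly end-extends `s`. -/
protected def slt (s t : SeqLT o v) : Prop :=
  s.le t ∧ s.len < t.len

/-- The empty sequence. -/
protected def empty (o v : Ordinal.{u}) : SeqLT o v where
  len := 0
  len_lt := lt_sup_iff.mpr (Or.inr zero_lt_one)
  val := fun _ => 0
  val_lt := fun β h => absurd h (zero_le : (0 : Ordinal) ≤ β).not_gt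
  val_zero := fun _ _ => rfl

/-- `s⌢⟨β⟩`: the sequence `s` extended by the single value `β`. -/
def snoc (s : SeqLT o v) (β : Ordinal.{u}) : SeqLT o v :=
  if h : s.len + 1 < o ⊔ 1 ∧ β < v then
    { len := s.len + 1
      len_lt := h.1
      val := fun γ => if γ = s.len then β else s.val γ
      val_lt := fun γ hγ => by
        rcases eq_or_ne γ s.len with rfl | hne
        · simpa using h.2
        · simp only [if_neg hne]
          refine s.val_lt γ (lt_of_le_of_ne ?_ hne)
          rw [Ordinal.add_one_eq_succ] at hγ
          exact Order.lt_succ_iff.mp hγ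
      val_zero := fun γ hγ => by
        have h1 : s.len < γ :=
          lt_of_lt_of_le (by rw [Ordinal.add_one_eq_succ]; exact Order.lt_succ s.len) hγ
        simp only [if_neg h1.ne']
        exact s.val_zero γ h1.le }
  else s

protected theorem le_refl (s : SeqLT o v) : s.le s :=
  ⟨le_rfl, fun _ _ => rfl⟩

protected theorem le_trans {s t u : SeqLT o v} (h1 : s.le t) (h2 : t.le u) : s.le u :=
  ⟨h1.1.trans h2.1, fun β hβ => (h1.2 β hβ).trans (h2.2 β (lt_of_lt_of_le hβ h1.1))⟩

end SeqLT

/-- An element of the generalized Baire space `v^o`. -/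
structure SeqFull (o v : Ordinal.{u}) : Type (u + 1) where
  val : Ordinal.{u} → Ordinal.{u}
  val_lt : ∀ β, β < o → val β < v
  val_zero : ∀ β, o ≤ β → val β = 0

/-- The restriction `x ↾ β` of `x : v^o` to an ordinal `β < o`. -/
def SeqFull.res {o v : Ordinal.{u}} (x : SeqFull o v) (β : Ordinal.{u}) : SeqLT o v :=
  if h : β < o ⊔ 1 then
    { len := β
      len_lt := h
      val := fun γ => if γ < β then x.val γ else 0
      val_lt := fun γ hγ => by
        simp only [if_pos hγ]
        rcases lt_sup_iff.mp h with h' | h'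
        · exact x.val_lt γ (hγ.trans h')
        · rw [Ordinal.lt_one_iff_zero] at h'
          exact absurd (h' ▸ hγ) (zero_le : (0 : Ordinal) ≤ γ).not_gt
      val_zero := fun γ hγ => if_neg (not_lt.mpr hγ) }
  else SeqLT.empty o v

/-- `s ⊆ x`: the sequence `s` is an initial segment of `x : v^o`. -/
def SeqLT.prefixOf {o v : Ordinal.{u}} (s : SeqLT o v) (x : SeqFull o v) : Prop :=
  ∀ β, β < s.len → s.val β = x.val β

/-! ## The bounded topology -/

/-- The basic open set `N_t`. -/
def basicOpen {o v : Ordinal.{u}} (t : SeqLT o v) : Set (SeqFull o v) :=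
  {x | t.prefixOf x}

/-- The bounded (standard) topology on the generalized Baire space, generated by the
basic open sets `N_t`. -/
instance (o v : Ordinal.{u}) : TopologicalSpace (SeqFull o v) :=
  TopologicalSpace.generateFrom {U | ∃ t : SeqLT o v, U = basicOpen t}

/-- `A` is a nowhere dense subset of `B` (in the subspace topology on `B`). -/
def NowhereDenseIn {o v : Ordinal.{u}} (A B : Set (SeqFull o v)) : Prop :=
  A ⊆ B ∧ interior (closure {x : ↥B | (x : SeqFull o v) ∈ A}) = ∅

/-- `A` is `o`-meager in `B`: `A ∩ B` is the union of (card of) `o` many nowhere dense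
subsets of `B`. -/
def MeagerIn {o v : Ordinal.{u}} (A B : Set (SeqFull o v)) : Prop :=
  ∃ F : {β : Ordinal.{u} // β < o} → Set (SeqFull o v),
    (∀ i, NowhereDenseIn (F i) B) ∧ A ∩ B = ⋃ i, F i

/-- `A` is comeager in `B`: `B \ A` is meager in `B`. -/
def ComeagerIn {o v : Ordinal.{u}} (A B : Set (SeqFull o v)) : Prop :=
  MeagerIn (B \ A) B

/-- `A` has the `o`-Baire property: for some open `U`, `A △ U` is meager. -/
def BaireSet {o v : Ordinal.{u}} (A : Set (SeqFull o v)) : Prop :=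
  ∃ U : Set (SeqFull o v), IsOpen U ∧ MeagerIn (symmDiff A U) Set.univ

/-! ## Homomorphisms of `v^{<o}` -/

/-- A homomorphism: strictly extension-preserving map of `v^{<o}` to itself. -/
def IsHom {o v : Ordinal.{u}} (f : SeqLT o v → SeqLT o v) : Prop :=
  ∀ s t : SeqLT o v, s.slt t → (f s).slt (f t)

/-- `f` is dense: for every `s` and every `t ⊇ f(s)` there is `β < v` with
`f(s⌢⟨β⟩) ⊇ t`. -/
def IsDenseMap {o v : Ordinal.{u}} (f : SeqLT o v → SeqLT o v) : Prop :=
  ∀ s t : SeqLT o v, (f s).le t → ∃ β, β < v ∧ t.le (f (s.snoc β))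

/-- `u = ⋃_{α<γ} s α` for a chain `s`. -/
def IsUnionOfChain {o v : Ordinal.{u}} (u : SeqLT o v) (γ : Ordinal.{u})
    (s : Ordinal.{u} → SeqLT o v) : Prop :=
  (∀ α, α < γ → (s α).le u) ∧ ∀ β, β < u.len → ∃ α, α < γ ∧ β < (s α).len

/-- `f` is continuous: for every limit `γ < o` and every strictly increasing sequence
`⟨s_α : α < γ⟩`, `f(⋃_{α<γ} s_α) = ⋃_{α<γ} f(s_α)`. -/
def IsContinuousMap {o v : Ordinal.{u}} (f : SeqLT o v → SeqLT o v) : Prop :=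
  ∀ γ : Ordinal.{u}, Order.IsSuccLimit γ → γ < o →
    ∀ s : Ordinal.{u} → SeqLT o v, (∀ α β, α < β → β < γ → (s α).slt (s β)) →
      ∀ u : SeqLT o v, IsUnionOfChain u γ s → IsUnionOfChain (f u) γ fun α => f (s α)

/-- `y = f*(x) = ⋃_{α<o} f(x↾α)` for a homomorphism `f`. -/
def FStarVal {o v : Ordinal.{u}} (f : SeqLT o v → SeqLT o v) (x y : SeqFull o v) : Prop :=
  (∀ α, α < o → (f (x.res α)).prefixOf y) ∧
    ∀ β, β < o → ∃ α, α < o ∧ β < (f (x.res α)).len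

/-! ## Clubs and the almost Baire property -/

/-- `C` is a club (closed unbounded set) in the ordinal `o`. -/
def IsClubIn (C : Set Ordinal.{u}) (o : Ordinal.{u}) : Prop :=
  (∀ γ ∈ C, γ < o) ∧ (∀ β, β < o → ∃ γ ∈ C, β ≤ γ) ∧
    ∀ β, β < o → 0 < β → (∀ γ, γ < β → ∃ ξ ∈ C, γ < ξ ∧ ξ < β) → β ∈ C

/-- The set of functions coding elements of the club filter as characteristic functions. -/
def ClSet (o v : Ordinal.{u}) : Set (SeqFull o v) :=
  {x | ∃ C : Set Ordinal.{u}, IsClubIn C o ∧ ∀ i ∈ C, x.val i ≠ 0}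

/-- The set of functions coding elements of the nonstationary ideal. -/
def NsSet (o v : Ordinal.{u}) : Set (SeqFull o v) :=
  {x | ∃ C : Set Ordinal.{u}, IsClubIn C o ∧ ∀ i ∈ C, x.val i = 0}

/-- `A` is almost Baire: there is a dense homomorphism `f` with `ran f* ⊆ A`, or a dense
continuous homomorphism `f` with `f ∅ = ∅` and `ran f* ⊆ Aᶜ`. -/
def AlmostBaire {o v : Ordinal.{u}} (A : Set (SeqFull o v)) : Prop :=
  ∃ f : SeqLT o v → SeqLT o v, IsHom f ∧ IsDenseMap f ∧
    ((∀ x y, FStarVal f x y → y ∈ A) ∨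
      ((∀ x y, FStarVal f x y → y ∉ A) ∧ IsContinuousMap f ∧
        f (SeqLT.empty o v) = SeqLT.empty o v))

/-! ## Banach–Mazur games of length `o`

A run of the game is a strictly increasing sequence `⟨s_α : α < o⟩` in `v^{<o}`;
player I plays at even positions (`0` and limits count as even), player II at odd ones.
In the game `G^t` the first move of player I must extend `t`; taking `t = ∅` gives the
plain Banach–Mazur game. -/

/-- `γ` is an even ordinal (`0` and limits are even). -/
def EvenOrd (γ : Ordinal.{u}) : Prop := ∃ δ : Ordinal.{u}, γ = 2 * δ

/-- `γ` is an odd ordinal. -/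
def OddOrd (γ : Ordinal.{u}) : Prop := ∃ δ : Ordinal.{u}, γ = 2 * δ + 1

/-- The moves of a (partial) run, as a function on ordinals. -/
abbrev Play (o v : Ordinal.{u}) := Ordinal.{u} → SeqLT o v

/-- A strategy: given the length of the current position and the moves so far,
produce the next move. -/
abbrev Strat (o v : Ordinal.{u}) := Ordinal.{u} → Play o v → SeqLT o v

/-- `p` is a legal partial run of length `γ` of the game `G^t`: strictly increasing moves,
the first move extends `t`, and the moves beyond `γ` are normalized to `∅`. -/
def IsPos {o v : Ordinal.{u}} (t : SeqLT o v) (p : Play o v) (γ : Ordinal.{u}) : Prop :=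
  (∀ α β, α < β → β < γ → (p α).slt (p β)) ∧ (0 < γ → t.le (p 0)) ∧
    ∀ α, γ ≤ α → p α = SeqLT.empty o v

/-- The restriction of a run to its first `γ` moves. -/
def resPlay {o v : Ordinal.{u}} (p : Play o v) (γ : Ordinal.{u}) : Play o v :=
  fun α => if α < γ then p α else SeqLT.empty o v

/-- `m` is a legal move at the position `p` of length `γ` in the game `G^t`. -/
def MoveOK {o v : Ordinal.{u}} (t : SeqLT o v) (p : Play o v) (γ : Ordinal.{u})
    (m : SeqLT o v) : Prop :=
  (∀ α, α < γ → (p α).slt m) ∧ (γ = 0 → t.le m)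

/-- `σ` is a strategy for player I in `G^t`: it assigns a legal move to every legal
position of even length. -/
def LegalI {o v : Ordinal.{u}} (t : SeqLT o v) (σ : Strat o v) : Prop :=
  ∀ γ, γ < o → EvenOrd γ → ∀ p, IsPos t p γ → MoveOK t p γ (σ γ p)

/-- `σ` is a strategy for player II in `G^t`: it assigns a legal move to every legal
position of odd length. -/
def LegalII {o v : Ordinal.{u}} (t : SeqLT o v) (σ : Strat o v) : Prop :=
  ∀ γ, γ < o → OddOrd γ → ∀ p, IsPos t p γ → MoveOK t p γ (σ γ p)

/-- The first `γ` moves of `p` follow the strategy `σ` of player I. -/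
def FollowsI {o v : Ordinal.{u}} (σ : Strat o v) (p : Play o v) (γ : Ordinal.{u}) : Prop :=
  ∀ α, α < γ → EvenOrd α → p α = σ α (resPlay p α)

/-- The first `γ` moves of `p` follow the strategy `σ` of player II. -/
def FollowsII {o v : Ordinal.{u}} (σ : Strat o v) (p : Play o v) (γ : Ordinal.{u}) : Prop :=
  ∀ α, α < γ → OddOrd α → p α = σ α (resPlay p α)

/-- `x = ⋃_{α<o} p α` is the outcome of the complete run `p`. -/
def IsOutcome {o v : Ordinal.{u}} (p : Play o v) (x : SeqFull o v) : Prop :=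
  (∀ α, α < o → (p α).prefixOf x) ∧ ∀ β, β < o → ∃ α, α < o ∧ β < (p α).len

/-- Player I has a winning strategy in the Banach–Mazur game `G^t(A)` of length `o`. -/
def WinIStrat {o v : Ordinal.{u}} (t : SeqLT o v) (A : Set (SeqFull o v)) : Prop :=
  ∃ σ : Strat o v, LegalI t σ ∧
    ∀ p : Play o v, IsPos t p o → FollowsI σ p o → ∃ x, IsOutcome p x ∧ x ∈ A

/-- Player II has a winning strategy in the Banach–Mazur game `G^t(A)` of length `o`. -/
def WinIIStrat {o v : Ordinal.{u}} (t : SeqLT o v) (A : Set (SeqFull o v)) : Prop :=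
  ∃ σ : Strat o v, LegalII t σ ∧
    ∀ p : Play o v, IsPos t p o → FollowsII σ p o → ∃ x, IsOutcome p x ∧ x ∉ A

/-- `σ` is a tactic for player II: its moves depend only on the union of the previous moves. -/
def IsTacticII {o v : Ordinal.{u}} (t : SeqLT o v) (σ : Strat o v) : Prop :=
  ∃ f : SeqLT o v → SeqLT o v, ∀ γ, γ < o → OddOrd γ → ∀ p, IsPos t p γ →
    ∀ u, IsUnionOfChain u γ p → σ γ p = f u

/-- Player II has a winning tactic in the Banach–Mazur game `G^t(A)` of length `o`. -/
def WinIITactic {o v : Ordinal.{u}} (t : SeqLT o v) (A : Set (SeqFull o v)) : Prop :=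
  ∃ σ : Strat o v, LegalII t σ ∧ IsTacticII t σ ∧
    ∀ p : Play o v, IsPos t p o → FollowsII σ p o → ∃ x, IsOutcome p x ∧ x ∉ A

/-! ## Trees and perfect sets -/

/-- A subtree of `v^{<o}`: a downwards closed set of sequences. -/
def IsSubtree {o v : Ordinal.{u}} (T : Set (SeqLT o v)) : Prop :=
  ∀ s ∈ T, ∀ r : SeqLT o v, r.le s → r ∈ T

/-- `T` is closed: every strictly increasing sequence in `T` of length `< o` has an
upper bound in `T`. -/
def TreeClosed {o v : Ordinal.{u}} (T : Set (SeqLT o v)) : Prop :=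
  ∀ γ : Ordinal.{u}, γ < o → ∀ s : Ordinal.{u} → SeqLT o v,
    (∀ α β, α < β → β < γ → (s α).slt (s β)) → (∀ α, α < γ → s α ∈ T) →
      ∃ b ∈ T, ∀ α, α < γ → (s α).le b

/-- `t` is a direct successor of `s`. -/
def IsDirectSucc {o v : Ordinal.{u}} (s t : SeqLT o v) : Prop :=
  s.slt t ∧ t.len = s.len + 1

/-- `T` is a perfect tree: a (nonempty) closed subtree whose splitting nodes are cofinal. -/
def IsPerfectTree {o v : Ordinal.{u}} (T : Set (SeqLT o v)) : Prop :=
  T.Nonempty ∧ IsSubtree T ∧ TreeClosed T ∧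
    ∀ s ∈ T, ∃ t ∈ T, s.le t ∧
      ∃ t₁ ∈ T, ∃ t₂ ∈ T, IsDirectSucc t t₁ ∧ IsDirectSucc t t₂ ∧ t₁ ≠ t₂

/-- The body `[T]` of a tree `T`: the set of branches of length `o` through `T`. -/
def treeBody {o v : Ordinal.{u}} (T : Set (SeqLT o v)) : Set (SeqFull o v) :=
  {x | ∀ α, α < o → x.res α ∈ T}


/-!
(⇒) Write `N_t ∖ A` as a union of nowhere dense sets `F_β`, `β < ν`, and enumerate `ν^{<ν}` as
`⟨E_ξ : ξ < ν⟩` (possible since `ν^{<ν} = ν`). Define `f` by recursion on the length: `f(∅) = t`,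
unions at limits (which stay in `ν^{<ν}` by regularity), and `f(s⌢⟨ξ⟩)` first extends `E_ξ` if
`E_ξ ⊇ f(s)`, which makes `f` dense, and then leaves `F_{len s}`, so that `f*(x)` avoids every
`F_β` and hence lies in `A`.

(⇐) For each `s` the set of `y ∈ N_{f(s)} ∖ A` lying in no `N_{f(s⌢⟨β⟩)}` is nowhere dense
because `f` is dense, and there are only `ν` many such sets. A point `y ∈ N_t ∖ A` outside all of
them can be followed through the tree: from `s` with `f(s) ⊆ y` pass to some `s⌢⟨β⟩` with
`f(s⌢⟨β⟩) ⊆ y`, and take unions at limits, where continuity keeps `f(s) ⊆ y`. The branch `x` so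
obtained has `f*(x) = y`, so `y ∈ A` after all.
-/

namespace SeqLT

variable {o v : Ordinal.{u}}

theorem ext {s t : SeqLT o v} (hlen : s.len = t.len)
    (hval : ∀ β, β < s.len → s.val β = t.val β) : s = t := by
  obtain ⟨l, hl, f, hf, hf0⟩ := s
  obtain ⟨l', hl', f', hf', hf0'⟩ := t
  obtain rfl : l = l' := hlen
  simp only [mk.injEq, true_and]
  funext β
  by_cases hβ : β < l
  · exact hval β hβ
  · rw [hf0 β (not_lt.1 hβ), hf0' β (not_lt.1 hβ)]

theorem len_le (s : SeqLT o v) : s.len ≤ o :=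
  Order.lt_succ_iff.1 <| s.len_lt.trans_le <| sup_le (Order.le_succ o) (by simp)

theorem slt_of_le_of_slt {s t r : SeqLT o v} (h₁ : s.le t) (h₂ : t.slt r) : s.slt r :=
  ⟨SeqLT.le_trans h₁ h₂.1, h₁.1.trans_lt h₂.2⟩

theorem slt_of_slt_of_le {s t r : SeqLT o v} (h₁ : s.slt t) (h₂ : t.le r) : s.slt r :=
  ⟨SeqLT.le_trans h₁.1 h₂, h₁.2.trans_le h₂.1⟩

theorem slt_trans {s t r : SeqLT o v} (h₁ : s.slt t) (h₂ : t.slt r) : s.slt r :=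
  slt_of_le_of_slt h₁.1 h₂

theorem prefixOf_of_le {s t : SeqLT o v} {x : SeqFull o v} (h : s.le t) (ht : t.prefixOf x) :
    s.prefixOf x :=
  fun β hβ => (h.2 β hβ).trans (ht β (hβ.trans_le h.1))

theorem le_of_prefixOf_of_len_le {s t : SeqLT o v} {x : SeqFull o v} (hs : s.prefixOf x)
    (ht : t.prefixOf x) (hlen : s.len ≤ t.len) : s.le t :=
  ⟨hlen, fun β hβ => (hs β hβ).trans (ht β (hβ.trans_le hlen)).symm⟩

theorem le_total_of_prefixOf {s t : SeqLT o v} {x : SeqFull o v} (hs : s.prefixOf x)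
    (ht : t.prefixOf x) : s.le t ∨ t.le s :=
  (le_total s.len t.len).imp (le_of_prefixOf_of_len_le hs ht) (le_of_prefixOf_of_len_le ht hs)

theorem eq_of_prefixOf_of_len_eq {s t : SeqLT o v} {x : SeqFull o v} (hs : s.prefixOf x)
    (ht : t.prefixOf x) (hlen : s.len = t.len) : s = t :=
  ext hlen (le_of_prefixOf_of_len_le hs ht hlen.le).2

section Snoc

variable {s : SeqLT o v} {β : Ordinal.{u}} (h : s.len + 1 < o ⊔ 1) (hβ : β < v)
include h hβ

theorem len_snoc : (s.snoc β).len = s.len + 1 := by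
  rw [snoc, dif_pos ⟨h, hβ⟩]

theorem val_snoc_len : (s.snoc β).val s.len = β := by
  rw [snoc, dif_pos ⟨h, hβ⟩]
  exact if_pos rfl

theorem val_snoc_of_lt {γ : Ordinal.{u}} (hγ : γ < s.len) : (s.snoc β).val γ = s.val γ := by
  rw [snoc, dif_pos ⟨h, hβ⟩]
  exact if_neg hγ.ne

theorem slt_snoc : s.slt (s.snoc β) :=
  ⟨⟨(len_snoc h hβ).symm ▸ le_self_add, fun _ hγ => (val_snoc_of_lt h hβ hγ).symm⟩,
    (len_snoc h hβ).symm ▸ Order.lt_add_one_iff.2 le_rfl⟩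

end Snoc

def toFull (hv : 0 < v) (s : SeqLT o v) : SeqFull o v where
  val β := if β < s.len then s.val β else 0
  val_lt β _ := by
    split_ifs with h
    · exact s.val_lt β h
    · exact hv
  val_zero β hβ := if_neg (not_lt.2 (s.len_le.trans hβ))

theorem prefixOf_toFull (hv : 0 < v) (s : SeqLT o v) : s.prefixOf (s.toFull hv) :=
  fun _ hβ => (if_pos hβ).symm

end SeqLT

namespace SeqFull

variable {o v : Ordinal.{u}} {x : SeqFull o v} {β : Ordinal.{u}}

theorem len_res (h : β < o ⊔ 1) : (x.res β).len = β := by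
  rw [res, dif_pos h]

theorem res_prefixOf (h : β < o ⊔ 1) : (x.res β).prefixOf x := fun γ hγ => by
  rw [len_res h] at hγ
  rw [res, dif_pos h]
  exact if_pos hγ

theorem res_len_eq {s : SeqLT o v} (hs : s.prefixOf x) : x.res s.len = s :=
  SeqLT.eq_of_prefixOf_of_len_eq (res_prefixOf s.len_lt) hs (len_res s.len_lt)

theorem res_zero (x : SeqFull o v) : x.res 0 = SeqLT.empty o v :=
  res_len_eq (s := SeqLT.empty o v) fun _ h => (not_lt_zero h).elim

end SeqFull

section Topology

open TopologicalSpace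

variable {o v : Ordinal.{u}}

theorem basicOpen_subset_of_le {s r : SeqLT o v} (h : s.le r) : basicOpen r ⊆ basicOpen s :=
  fun _ => SeqLT.prefixOf_of_le h

theorem basicOpen_nonempty (hv : 0 < v) (s : SeqLT o v) : (basicOpen s).Nonempty :=
  ⟨s.toFull hv, s.prefixOf_toFull hv⟩

theorem disjoint_basicOpen_of_not_le {s r : SeqLT o v} (hsr : ¬ s.le r) (hrs : ¬ r.le s) :
    Disjoint (basicOpen s) (basicOpen r) :=
  Set.disjoint_left.2 fun _ hs hr => (SeqLT.le_total_of_prefixOf hs hr).elim hsr hrs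

theorem isTopologicalBasis_basicOpen :
    IsTopologicalBasis {U : Set (SeqFull o v) | ∃ t, U = basicOpen t} where
  exists_subset_inter := by
    rintro _ ⟨a, rfl⟩ _ ⟨b, rfl⟩ x ⟨ha, hb⟩
    rcases SeqLT.le_total_of_prefixOf ha hb with h | h
    · exact ⟨_, ⟨b, rfl⟩, hb, fun z hz => ⟨basicOpen_subset_of_le h hz, hz⟩⟩
    · exact ⟨_, ⟨a, rfl⟩, ha, fun z hz => ⟨hz, basicOpen_subset_of_le h hz⟩⟩
  sUnion_eq := Set.eq_univ_of_forall fun x =>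
    ⟨_, ⟨SeqLT.empty o v, rfl⟩, fun _ h => (not_lt_zero h).elim⟩
  eq_generateFrom := rfl

theorem isOpen_basicOpen (s : SeqLT o v) : IsOpen (basicOpen s) :=
  isTopologicalBasis_basicOpen.isOpen ⟨s, rfl⟩

theorem isNowhereDense_iff_basicOpen (hv : 0 < v) {F : Set (SeqFull o v)} :
    IsNowhereDense F ↔ ∀ s : SeqLT o v, ∃ s', s.le s' ∧ Disjoint (basicOpen s') F := by
  rw [IsNowhereDense, interior_eq_empty_iff_dense_compl, ← interior_compl,
    isTopologicalBasis_basicOpen.dense_iff]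
  refine ⟨fun h s => ?_, fun h _ ⟨s, hs⟩ _ => ?_⟩
  · obtain ⟨x, hxs, hx⟩ := h _ ⟨s, rfl⟩ (basicOpen_nonempty hv s)
    obtain ⟨_, ⟨r, rfl⟩, hxr, hr⟩ :=
      isTopologicalBasis_basicOpen.exists_subset_of_mem_open hx isOpen_interior
    rcases SeqLT.le_total_of_prefixOf hxs hxr with h | h
    · exact ⟨r, h, Set.subset_compl_iff_disjoint_right.1 (hr.trans interior_subset)⟩
    · exact ⟨s, SeqLT.le_refl s, Set.subset_compl_iff_disjoint_right.1
        ((basicOpen_subset_of_le h).trans (hr.trans interior_subset))⟩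
  · obtain ⟨s', hss', hdisj⟩ := h s
    obtain ⟨x, hx⟩ := basicOpen_nonempty hv s'
    refine ⟨x, hs ▸ basicOpen_subset_of_le hss' hx, ?_⟩
    exact interior_maximal (Set.subset_compl_iff_disjoint_right.2 hdisj) (isOpen_basicOpen s') hx

theorem nowhereDenseIn_iff_of_isOpen {F B : Set (SeqFull o v)} (hB : IsOpen B) (hF : F ⊆ B) :
    NowhereDenseIn F B ↔ IsNowhereDense F := by
  refine and_iff_right_of_imp (fun _ => hF) |>.trans ?_
  have hval : Subtype.val '' {x : B | x.1 ∈ F} = F := by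
    rw [show {x : B | x.1 ∈ F} = Subtype.val ⁻¹' F from rfl, Subtype.image_preimage_coe,
      Set.inter_eq_right.2 hF]
  refine ⟨fun h => hval ▸ IsNowhereDense.image_val h, fun h => ?_⟩
  show interior _ = ∅
  rw [Topology.IsInducing.subtypeVal.closure_eq_preimage_closure_image, hval,
    ← hB.isOpenMap_subtype_val.preimage_interior_eq_interior_preimage continuous_subtype_val, h,
    Set.preimage_empty]

end Topology

section Chains

variable {o v : Ordinal.{u}}

def IsStrictChain (γ : Ordinal.{u}) (c : Ordinal.{u} → SeqLT o v) : Prop :=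
  ∀ α β, α < β → β < γ → (c α).slt (c β)

variable {γ : Ordinal.{u}} {c : Ordinal.{u} → SeqLT o v}

theorem IsStrictChain.le_len (hc : IsStrictChain γ c) {α : Ordinal.{u}} (hα : α < γ) :
    α ≤ (c α).len := by
  induction α using WellFoundedLT.induction with
  | ind α ih =>
    by_contra! hlt
    exact (ih _ hlt (hlt.trans hα)).not_gt (hc _ α hlt hα).2

theorem IsStrictChain.mono {γ' : Ordinal.{u}} (hc : IsStrictChain γ' c) (h : γ ≤ γ') :
    IsStrictChain γ c :=
  fun α β hαβ hβ => hc α β hαβ (hβ.trans_le h)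

theorem IsStrictChain.val_eq (hc : IsStrictChain γ c) {α α' β : Ordinal.{u}} (hα : α < γ)
    (hα' : α' < γ) (hβ : β < (c α).len) (hβ' : β < (c α').len) :
    (c α).val β = (c α').val β := by
  rcases lt_trichotomy α α' with h | rfl | h
  · exact (hc α α' h hα').1.2 β hβ
  · rfl
  · exact ((hc α' α h hα).1.2 β hβ').symm

open Classical in
def chainVal (γ : Ordinal.{u}) (c : Ordinal.{u} → SeqLT o v) (β : Ordinal.{u}) : Ordinal.{u} :=
  if h : ∃ α, α < γ ∧ β < (c α).len then (c h.choose).val β else 0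

theorem chainVal_eq (hc : IsStrictChain γ c) {α β : Ordinal.{u}} (hα : α < γ)
    (hβ : β < (c α).len) : chainVal γ c β = (c α).val β := by
  have h : ∃ α, α < γ ∧ β < (c α).len := ⟨α, hα, hβ⟩
  rw [chainVal, dif_pos h]
  exact hc.val_eq h.choose_spec.1 hα h.choose_spec.2 hβ

theorem chainVal_eq_zero {β : Ordinal.{u}} (h : ∀ α, α < γ → (c α).len ≤ β) :
    chainVal γ c β = 0 :=
  dif_neg fun ⟨α, hα, hβ⟩ => (h α hα).not_gt hβ

theorem IsUnionOfChain.slt {u : SeqLT o v} (hu : IsUnionOfChain u γ c)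
    (hγ : Order.IsSuccLimit γ) (hc : IsStrictChain γ c) {α : Ordinal.{u}} (hα : α < γ) :
    (c α).slt u :=
  SeqLT.slt_of_slt_of_le (hc α (α + 1) (Order.lt_add_one_iff.2 le_rfl) (hγ.add_one_lt hα))
    (hu.1 _ (hγ.add_one_lt hα))

theorem IsUnionOfChain.prefixOf {u : SeqLT o v} {x : SeqFull o v} (hu : IsUnionOfChain u γ c)
    (h : ∀ α, α < γ → (c α).prefixOf x) : u.prefixOf x := fun β hβ => by
  obtain ⟨α, hα, hβα⟩ := hu.2 β hβ
  rw [← (hu.1 α hα).2 β hβα]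
  exact h α hα β hβα

theorem IsUnionOfChain.isSuccLimit_len {u : SeqLT o v} (hu : IsUnionOfChain u γ c)
    (hγ : Order.IsSuccLimit γ) (hc : IsStrictChain γ c) : Order.IsSuccLimit u.len := by
  refine Ordinal.isSuccLimit_iff.2 ⟨(hu.slt hγ hc hγ.bot_lt).2.ne_bot, ?_⟩
  refine Order.isSuccPrelimit_iff_succ_lt.2 fun a ha => ?_
  obtain ⟨α, hα, haα⟩ := hu.2 a ha
  exact (Order.succ_le_of_lt haα).trans_lt (hu.slt hγ hc hα).2

end Chains

namespace Cardinal.IsRegular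

variable {ν : Cardinal.{u}} (hreg : ν.IsRegular) {v : Ordinal.{u}}
include hreg

theorem ord_sup_one : ν.ord ⊔ 1 = ν.ord :=
  sup_eq_left.2 (Order.one_le_iff_pos.2 hreg.ord_pos)

theorem isSuccLimit_ord : Order.IsSuccLimit ν.ord :=
  Cardinal.isSuccLimit_ord hreg.aleph0_le

theorem len_lt_ord (s : SeqLT ν.ord v) : s.len < ν.ord :=
  s.len_lt.trans_eq hreg.ord_sup_one

theorem len_add_one_lt (s : SeqLT ν.ord v) : s.len + 1 < ν.ord ⊔ 1 :=
  (hreg.isSuccLimit_ord.add_one_lt (hreg.len_lt_ord s)).trans_eq hreg.ord_sup_one.symm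

theorem iSup_lt_ord {γ : Ordinal.{u}} (hγ : γ < ν.ord) (f : Set.Iio γ → Ordinal.{u})
    (hf : ∀ α, f α < ν.ord) : ⨆ α, f α < ν.ord := by
  refine Ordinal.lift_iSup_lt_of_lt_cof ?_ hf
  rw [Cardinal.mk_Iio_ordinal, ← Ordinal.lift_cof, hreg.cof_ord]
  simp only [Cardinal.lift_lift, Cardinal.lift_lt]
  exact Cardinal.lt_ord.1 hγ

theorem exists_isUnionOfChain {γ : Ordinal.{u}} (hγ : γ < ν.ord)
    {c : Ordinal.{u} → SeqLT ν.ord v} (hc : IsStrictChain γ c) :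
    ∃ u, IsUnionOfChain u γ c := by
  have hlen : ⨆ α : Set.Iio γ, (c α).len < ν.ord :=
    hreg.iSup_lt_ord hγ _ fun α => hreg.len_lt_ord (c α)
  refine ⟨⟨⨆ α : Set.Iio γ, (c α).len, hlen.trans_eq hreg.ord_sup_one.symm, chainVal γ c, ?_, ?_⟩,
    ?_, ?_⟩
  · intro β hβ
    obtain ⟨⟨α, hα⟩, hβα⟩ := Ordinal.lt_iSup_iff.1 hβ
    rw [chainVal_eq hc hα hβα]
    exact (c α).val_lt β hβα
  · intro β hβ
    exact chainVal_eq_zero fun α hα => (Ordinal.le_iSup _ ⟨α, hα⟩).trans hβ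
  · intro α hα
    exact ⟨Ordinal.le_iSup (fun α : Set.Iio γ => (c α).len) ⟨α, hα⟩,
      fun β hβ => (chainVal_eq hc hα hβ).symm⟩
  · intro β hβ
    obtain ⟨⟨α, hα⟩, hβα⟩ := Ordinal.lt_iSup_iff.1 hβ
    exact ⟨α, hα, hβα⟩

theorem exists_isOutcome (hv : 0 < v) {c : Ordinal.{u} → SeqLT ν.ord v}
    (hc : IsStrictChain ν.ord c) : ∃ x, IsOutcome c x := by
  refine ⟨⟨chainVal ν.ord c, fun β _ => ?_, fun β hβ => ?_⟩, fun α hα β hβ => ?_, fun β hβ => ?_⟩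
  · unfold chainVal
    split_ifs with h
    · exact (c _).val_lt β h.choose_spec.2
    · exact hv
  · exact chainVal_eq_zero fun α _ => (hreg.len_lt_ord (c α)).le.trans hβ
  · exact (chainVal_eq hc hα hβ).symm
  · have hβ1 := hreg.isSuccLimit_ord.add_one_lt hβ
    exact ⟨β + 1, hβ1, (Order.lt_add_one_iff.2 le_rfl).trans_le (hc.le_len hβ1)⟩

end Cardinal.IsRegular

section ChainRec

variable {o v : Ordinal.{u}}

theorem isUnionOfChain_congr {u : SeqLT o v} {γ : Ordinal.{u}} {c c' : Ordinal.{u} → SeqLT o v}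
    (h : ∀ α, α < γ → c α = c' α) : IsUnionOfChain u γ c ↔ IsUnionOfChain u γ c' := by
  unfold IsUnionOfChain
  refine and_congr (forall₂_congr fun α hα => by rw [h α hα]) (forall₂_congr fun β _ => ?_)
  exact exists_congr fun α => and_congr_right fun hα => by rw [h α hα]

open Classical in
def chainRec (init : SeqLT o v) (next : Ordinal.{u} → SeqLT o v → SeqLT o v)
    (α : Ordinal.{u}) : SeqLT o v :=
  Ordinal.limitRecOn α init next fun γ _ ih =>
    if h : ∃ u, IsUnionOfChain u γ (fun β => if hβ : β < γ then ih β hβ else init) then h.choose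
    else init

variable {init : SeqLT o v} {next : Ordinal.{u} → SeqLT o v → SeqLT o v}

@[simp]
theorem chainRec_zero : chainRec init next 0 = init := by
  simp [chainRec]

@[simp]
theorem chainRec_add_one (α : Ordinal.{u}) :
    chainRec init next (α + 1) = next α (chainRec init next α) := by
  simp [chainRec]

open Classical in
theorem chainRec_limit {γ : Ordinal.{u}} (hγ : Order.IsSuccLimit γ) :
    chainRec init next γ =
      if h : ∃ u, IsUnionOfChain u γ
        (fun β => if β < γ then chainRec init next β else init) then h.choose
      else init :=
  Ordinal.limitRecOn_limit _ _ _ _ hγ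

theorem isUnionOfChain_chainRec {γ : Ordinal.{u}} (hγ : Order.IsSuccLimit γ)
    (h : ∃ u, IsUnionOfChain u γ (chainRec init next)) :
    IsUnionOfChain (chainRec init next γ) γ (chainRec init next) := by
  have hc : ∀ β, β < γ →
      (if β < γ then chainRec init next β else init) = chainRec init next β :=
    fun β hβ => if_pos hβ
  have h' : ∃ u, IsUnionOfChain u γ
      (fun β => if β < γ then chainRec init next β else init) := by
    simpa only [isUnionOfChain_congr hc] using h
  rw [chainRec_limit hγ, dif_pos h']
  exact (isUnionOfChain_congr hc).1 h'.choose_spec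

theorem chainRec_congr {next' : Ordinal.{u} → SeqLT o v → SeqLT o v} (α : Ordinal.{u}) :
    (∀ β, β < α → next β = next' β) → chainRec init next α = chainRec init next' α := by
  induction α using Ordinal.limitRecOn with
  | zero => simp
  | add_one α ih =>
    intro h
    rw [chainRec_add_one, chainRec_add_one, h α (Order.lt_add_one_iff.2 le_rfl),
      ih fun β hβ => h β (hβ.trans (Order.lt_add_one_iff.2 le_rfl))]
  | limit γ hγ ih =>
    intro h
    have hc : (fun β => if β < γ then chainRec init next β else init) =
        fun β => if β < γ then chainRec init next' β else init := by
      funext β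
      split_ifs with hβ
      · exact ih β hβ fun β' hβ' => h β' (hβ'.trans hβ)
      · rfl
    rw [chainRec_limit hγ, chainRec_limit hγ, hc]

end ChainRec

namespace Cardinal.IsRegular

variable {ν : Cardinal.{u}} (hreg : ν.IsRegular) {v : Ordinal.{u}} {init : SeqLT ν.ord v}
  {next : Ordinal.{u} → SeqLT ν.ord v → SeqLT ν.ord v}
include hreg

theorem isStrictChain_chainRec (hnext : ∀ β r, SeqLT.slt r (next β r)) :
    IsStrictChain ν.ord (chainRec init next) := by
  suffices ∀ α, α < ν.ord → ∀ β, β < α → (chainRec init next β).slt (chainRec init next α) from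
    fun β α hβα hα => this α hα β hβα
  intro α
  induction α using Ordinal.limitRecOn with
  | zero => exact fun _ β hβ => (not_lt_zero hβ).elim
  | add_one α ih =>
    intro hα β hβ
    rw [chainRec_add_one]
    rcases (Order.lt_add_one_iff.1 hβ).lt_or_eq with hβα | rfl
    · exact SeqLT.slt_trans (ih ((Order.lt_add_one_iff.2 le_rfl).trans hα) β hβα) (hnext _ _)
    · exact hnext _ _
  | limit γ hγ ih =>
    intro hγν β hβ
    have hc : IsStrictChain γ (chainRec init next) := fun α β hαβ hβγ =>
      ih β hβγ (hβγ.trans hγν) α hαβ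
    exact (isUnionOfChain_chainRec hγ (hreg.exists_isUnionOfChain hγν hc)).slt hγ hc hβ

theorem isUnionOfChain_chainRec_of_lt (hnext : ∀ β r, SeqLT.slt r (next β r)) {γ : Ordinal.{u}}
    (hγ : Order.IsSuccLimit γ) (hγν : γ < ν.ord) :
    IsUnionOfChain (chainRec init next γ) γ (chainRec init next) :=
  isUnionOfChain_chainRec hγ <|
    hreg.exists_isUnionOfChain hγν ((hreg.isStrictChain_chainRec hnext).mono hγν.le)

end Cardinal.IsRegular

section RecHom

variable {o v : Ordinal.{u}}

/-- `recHom t step` is the `f` with `f ∅ = t`, `f (s⌢⟨x⟩) = step (len s) (f s) x` and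
`f (⋃_{α<γ} s_α) = ⋃_{α<γ} f s_α` at limits `γ`. -/
def recHom (t : SeqLT o v) (step : Ordinal.{u} → SeqLT o v → Ordinal.{u} → SeqLT o v)
    (s : SeqLT o v) : SeqLT o v :=
  chainRec t (fun β r => step β r (s.val β)) s.len

variable {t : SeqLT o v} {step : Ordinal.{u} → SeqLT o v → Ordinal.{u} → SeqLT o v}

theorem recHom_empty : recHom t step (SeqLT.empty o v) = t :=
  chainRec_zero

theorem recHom_eq_of_le {s s' : SeqLT o v} (h : s.le s') :
    recHom t step s = chainRec t (fun β r => step β r (s'.val β)) s.len :=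
  chainRec_congr _ fun β hβ => by rw [h.2 β hβ]

theorem recHom_snoc {s : SeqLT o v} {x : Ordinal.{u}} (h : s.len + 1 < o ⊔ 1) (hx : x < v) :
    recHom t step (s.snoc x) = step s.len (recHom t step s) x := by
  rw [recHom, SeqLT.len_snoc h hx, chainRec_add_one, SeqLT.val_snoc_len h hx,
    ← recHom_eq_of_le (SeqLT.slt_snoc h hx).1]

end RecHom

namespace Cardinal.IsRegular

variable {ν : Cardinal.{u}} (hreg : ν.IsRegular) {v : Ordinal.{u}} {t : SeqLT ν.ord v}
  {step : Ordinal.{u} → SeqLT ν.ord v → Ordinal.{u} → SeqLT ν.ord v}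
include hreg

theorem isHom_recHom (hstep : ∀ β r x, SeqLT.slt r (step β r x)) : IsHom (recHom t step) :=
    fun s s' hss' => by
  rw [recHom_eq_of_le hss'.1]
  exact hreg.isStrictChain_chainRec (fun β r => hstep β r _) _ _ hss'.2 (hreg.len_lt_ord s')

theorem isContinuousMap_recHom (hstep : ∀ β r x, SeqLT.slt r (step β r x)) :
    IsContinuousMap (recHom t step) := by
  intro γ hγ _ s hs u hu
  have hlim := hu.isSuccLimit_len hγ hs
  have hC := hreg.isStrictChain_chainRec (init := t) (fun β r => hstep β r (u.val β))
  have hCu := hreg.isUnionOfChain_chainRec_of_lt (init := t) (fun β r => hstep β r (u.val β))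
    hlim (hreg.len_lt_ord u)
  have hsu : ∀ α, α < γ → (s α).len < u.len := fun α hα => (hu.slt hγ hs hα).2
  refine ⟨fun α hα => ?_, fun β hβ => ?_⟩
  · show (recHom t step (s α)).le _
    rw [recHom_eq_of_le (hu.1 α hα)]
    exact (hC _ _ (hsu α hα) (hreg.len_lt_ord u)).1
  · obtain ⟨δ, hδ, hβδ⟩ := hCu.2 β hβ
    obtain ⟨α, hα, hδα⟩ := hu.2 δ hδ
    refine ⟨α, hα, ?_⟩
    show β < (recHom t step (s α)).len
    rw [recHom_eq_of_le (hu.1 α hα)]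
    exact hβδ.trans (hC _ _ hδα ((hsu α hα).trans (hreg.len_lt_ord u))).2

theorem isDenseMap_recHom
    (hdense : ∀ β (r r' : SeqLT ν.ord v), r.le r' → ∃ x, x < v ∧ r'.le (step β r x)) :
    IsDenseMap (recHom t step) := fun s r' hr' => by
  obtain ⟨x, hx, hle⟩ := hdense s.len _ r' hr'
  exact ⟨x, hx, by rwa [recHom_snoc (hreg.len_add_one_lt s) hx]⟩

theorem exists_step_prefixOf_of_fStarVal {x y : SeqFull ν.ord v}
    (hxy : FStarVal (recHom t step) x y) {β : Ordinal.{u}} (hβ : β < ν.ord) :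
    ∃ r, (step β r (x.val β)).prefixOf y := by
  have hβ1 := hreg.isSuccLimit_ord.add_one_lt hβ
  have h : β + 1 < ν.ord ⊔ 1 := hβ1.trans_eq hreg.ord_sup_one.symm
  have hval : (x.res (β + 1)).val β = x.val β :=
    SeqFull.res_prefixOf h β ((SeqFull.len_res h).symm ▸ Order.lt_add_one_iff.2 le_rfl)
  have hpre := hxy.1 (β + 1) hβ1
  rw [recHom, SeqFull.len_res h, chainRec_add_one, hval] at hpre
  exact ⟨_, hpre⟩

end Cardinal.IsRegular

namespace Cardinal.IsRegular

variable {ν : Cardinal.{u}} (hreg : ν.IsRegular) (hpow : Cardinal.powerlt ν ν = ν)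
include hreg hpow

theorem mk_seqLT_le :
    #(SeqLT ν.ord ν.ord) ≤ #(Set.Iio ν.ord) := by
  classical
  let g : (Σ α : Set.Iio ν.ord, Set.Iio α.1 → Set.Iio ν.ord) → SeqLT ν.ord ν.ord := fun d =>
    { len := d.1
      len_lt := d.1.2.trans_eq hreg.ord_sup_one.symm
      val := fun β => if h : β < d.1 then d.2 ⟨β, h⟩ else 0
      val_lt := fun β hβ => by rw [dif_pos hβ]; exact (d.2 ⟨β, hβ⟩).2
      val_zero := fun β hβ => dif_neg (not_lt.2 hβ) }
  have hg : Function.Surjective g := fun s =>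
    ⟨⟨⟨s.len, hreg.len_lt_ord s⟩, fun β => ⟨s.val β, s.val_lt β β.2⟩⟩,
      SeqLT.ext rfl fun β hβ => dif_pos hβ⟩
  have hIio : #(Set.Iio ν.ord) = Cardinal.lift.{u + 1} ν := by
    rw [Cardinal.mk_Iio_ordinal, Cardinal.card_ord]
  calc #(SeqLT ν.ord ν.ord)
      ≤ #(Σ α : Set.Iio ν.ord, Set.Iio α.1 → Set.Iio ν.ord) := Cardinal.mk_le_of_surjective hg
    _ ≤ Cardinal.sum fun _ : Set.Iio ν.ord => Cardinal.lift.{u + 1} ν := by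
      rw [Cardinal.mk_sigma]
      refine Cardinal.sum_le_sum _ _ fun α => ?_
      rw [Cardinal.mk_arrow, Cardinal.lift_id, Cardinal.lift_id, hIio, Cardinal.mk_Iio_ordinal,
        ← Cardinal.lift_power, Cardinal.lift_le]
      exact (Cardinal.le_powerlt ν (Cardinal.lt_ord.1 α.2)).trans hpow.le
    _ = #(Set.Iio ν.ord) := by
      rw [Cardinal.sum_const', hIio, ← Cardinal.lift_mul, Cardinal.mul_eq_self hreg.aleph0_le]

theorem exists_enum :
    ∃ E : Ordinal.{u} → SeqLT ν.ord ν.ord, ∀ s, ∃ β, β < ν.ord ∧ E β = s := by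
  classical
  obtain ⟨e⟩ := (Cardinal.le_def _ _).1 (hreg.mk_seqLT_le hpow)
  have : Nonempty (SeqLT ν.ord ν.ord) := ⟨SeqLT.empty _ _⟩
  refine ⟨fun β => if h : β < ν.ord then Function.invFun e ⟨β, h⟩ else SeqLT.empty _ _,
    fun s => ⟨e s, (e s).2, ?_⟩⟩
  simp only [dif_pos (show (e s : Ordinal.{u}) < ν.ord from (e s).2)]
  exact Function.leftInverse_invFun e.injective s

theorem exists_step_avoiding {F : Ordinal.{u} → Set (SeqFull ν.ord ν.ord)}
    (hF : ∀ β, IsNowhereDense (F β)) :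
    ∃ step : Ordinal.{u} → SeqLT ν.ord ν.ord → Ordinal.{u} → SeqLT ν.ord ν.ord,
      (∀ β r x, SeqLT.slt r (step β r x)) ∧
      (∀ β r r', SeqLT.le r r' → ∃ x, x < ν.ord ∧ r'.le (step β r x)) ∧
      ∀ β r x, Disjoint (basicOpen (step β r x)) (F β) := by
  classical
  obtain ⟨E, hE⟩ := hreg.exists_enum hpow
  choose d hd_le hd_disj using fun β => (isNowhereDense_iff_basicOpen hreg.ord_pos).1 (hF β)
  have hsnoc (r : SeqLT ν.ord ν.ord) : r.slt (r.snoc 0) :=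
    SeqLT.slt_snoc (hreg.len_add_one_lt r) hreg.ord_pos
  -- reach `E x` if it extends `r` (density), then leave `F β`, then add a value (strictness)
  refine ⟨fun β r x => (d β (if r.le (E x) then E x else r)).snoc 0, fun β r x => ?_,
    fun β r r' hr' => ?_, fun β r x => ?_⟩
  · refine SeqLT.slt_of_le_of_slt ?_ (hsnoc _)
    split_ifs with h
    · exact SeqLT.le_trans h (hd_le β _)
    · exact hd_le β r
  · obtain ⟨x, hx, rfl⟩ := hE r'
    refine ⟨x, hx, ?_⟩
    simp only [if_pos hr']
    exact SeqLT.le_trans (hd_le β _) (hsnoc _).1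
  · exact (hd_disj β _).mono_left (basicOpen_subset_of_le (hsnoc _).1)

theorem exists_hom_avoiding (t : SeqLT ν.ord ν.ord)
    {F : Ordinal.{u} → Set (SeqFull ν.ord ν.ord)} (hF : ∀ β, IsNowhereDense (F β)) :
    ∃ f : SeqLT ν.ord ν.ord → SeqLT ν.ord ν.ord,
      IsHom f ∧ IsDenseMap f ∧ IsContinuousMap f ∧ f (SeqLT.empty ν.ord ν.ord) = t ∧
        ∀ x y, FStarVal f x y → y ∈ basicOpen t ∧ ∀ β, β < ν.ord → y ∉ F β := by
  obtain ⟨step, hstep, hdense, hdisj⟩ := hreg.exists_step_avoiding hpow hF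
  refine ⟨recHom t step, hreg.isHom_recHom hstep, hreg.isDenseMap_recHom hdense,
    hreg.isContinuousMap_recHom hstep, recHom_empty, fun x y hxy => ⟨?_, fun β hβ hy => ?_⟩⟩
  · have h0 := hxy.1 0 hreg.ord_pos
    rwa [SeqFull.res_zero, recHom_empty] at h0
  · obtain ⟨r, hr⟩ := hreg.exists_step_prefixOf_of_fStarVal hxy hβ
    exact Set.disjoint_left.1 (hdisj β r _) hr hy

end Cardinal.IsRegular

theorem IsHom.le_of_le {o v : Ordinal.{u}} {f : SeqLT o v → SeqLT o v} (hf : IsHom f)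
    {s s' : SeqLT o v} (h : s.le s') : (f s).le (f s') := by
  rcases h.1.lt_or_eq with hlt | heq
  · exact (hf s s' ⟨h, hlt⟩).1
  · rw [SeqLT.ext heq h.2]
    exact SeqLT.le_refl _

open Classical in
def followPath {o v : Ordinal.{u}} (f : SeqLT o v → SeqLT o v) (y : SeqFull o v) :
    Ordinal.{u} → SeqLT o v :=
  chainRec (SeqLT.empty o v) fun _ r =>
    if h : ∃ β, β < v ∧ (f (r.snoc β)).prefixOf y then r.snoc h.choose else r.snoc 0

open Classical in
theorem followPath_add_one {o v : Ordinal.{u}} {f : SeqLT o v → SeqLT o v} {y : SeqFull o v}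
    (α : Ordinal.{u}) :
    followPath f y (α + 1) =
      if h : ∃ β, β < v ∧ (f ((followPath f y α).snoc β)).prefixOf y then
        (followPath f y α).snoc h.choose
      else (followPath f y α).snoc 0 :=
  chainRec_add_one α

namespace Cardinal.IsRegular

variable {ν : Cardinal.{u}} (hreg : ν.IsRegular) {v : Ordinal.{u}}
  {f : SeqLT ν.ord v → SeqLT ν.ord v} {y : SeqFull ν.ord v}
include hreg

theorem isStrictChain_followPath (hv : 0 < v) : IsStrictChain ν.ord (followPath f y) := by
  refine hreg.isStrictChain_chainRec fun _ r => ?_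
  split_ifs with h
  · exact SeqLT.slt_snoc (hreg.len_add_one_lt r) h.choose_spec.1
  · exact SeqLT.slt_snoc (hreg.len_add_one_lt r) hv

theorem prefixOf_followPath (hv : 0 < v) (hcont : IsContinuousMap f)
    (h0 : (f (SeqLT.empty ν.ord v)).prefixOf y)
    (hext : ∀ s, (f s).prefixOf y → ∃ β, β < v ∧ (f (s.snoc β)).prefixOf y)
    (α : Ordinal.{u}) : α < ν.ord → (f (followPath f y α)).prefixOf y := by
  induction α using Ordinal.limitRecOn with
  | zero => exact fun _ => by rwa [followPath, chainRec_zero]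
  | add_one α ih =>
    intro hα
    have h := hext _ (ih ((Order.lt_add_one_iff.2 le_rfl).trans hα))
    rw [followPath_add_one, dif_pos h]
    exact h.choose_spec.2
  | limit γ hγ ih =>
    intro hγν
    have hp := (hreg.isStrictChain_followPath (f := f) (y := y) hv).mono hγν.le
    have hu := hcont γ hγ hγν _ hp _
      (isUnionOfChain_chainRec hγ (hreg.exists_isUnionOfChain hγν hp))
    exact hu.prefixOf fun δ hδ => ih δ hδ (hδ.trans hγν)

theorem exists_fStarVal (hv : 0 < v) (hhom : IsHom f) (hcont : IsContinuousMap f)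
    (h0 : (f (SeqLT.empty ν.ord v)).prefixOf y)
    (hext : ∀ s, (f s).prefixOf y → ∃ β, β < v ∧ (f (s.snoc β)).prefixOf y) :
    ∃ x, FStarVal f x y := by
  have hp := hreg.isStrictChain_followPath (f := f) (y := y) hv
  have hfp : IsStrictChain ν.ord (f ∘ followPath f y) :=
    fun α β hαβ hβ => hhom _ _ (hp α β hαβ hβ)
  obtain ⟨x, hx⟩ := hreg.exists_isOutcome hv hp
  refine ⟨x, fun α hα => ?_, fun β hβ => ?_⟩
  · have hle : (x.res α).le (followPath f y α) := by
      have h : α < ν.ord ⊔ 1 := hα.trans_eq hreg.ord_sup_one.symm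
      refine SeqLT.le_of_prefixOf_of_len_le (SeqFull.res_prefixOf h) (hx.1 α hα) ?_
      rw [SeqFull.len_res h]
      exact hp.le_len hα
    exact SeqLT.prefixOf_of_le (hhom.le_of_le hle)
      (hreg.prefixOf_followPath hv hcont h0 hext α hα)
  · have hβ1 := hreg.isSuccLimit_ord.add_one_lt hβ
    refine ⟨_, hreg.len_lt_ord (followPath f y (β + 1)), ?_⟩
    rw [SeqFull.res_len_eq (hx.1 _ hβ1)]
    exact (Order.lt_add_one_iff.2 le_rfl).trans_le (hfp.le_len hβ1)

end Cardinal.IsRegular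

theorem IsDenseMap.isNowhereDense {o v : Ordinal.{u}} (hv : 0 < v)
    {f : SeqLT o v → SeqLT o v} (hf : IsDenseMap f) (s : SeqLT o v) :
    IsNowhereDense {y | (f s).prefixOf y ∧ ∀ β, β < v → ¬ (f (s.snoc β)).prefixOf y} := by
  refine (isNowhereDense_iff_basicOpen hv).2 fun r => ?_
  have hext : ∀ m, (f s).le m → r.le m →
      ∃ r', r.le r' ∧ Disjoint (basicOpen r')
        {y | (f s).prefixOf y ∧ ∀ β, β < v → ¬ (f (s.snoc β)).prefixOf y} := fun m hsm hrm => by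
    obtain ⟨β, hβ, hmβ⟩ := hf s m hsm
    exact ⟨_, SeqLT.le_trans hrm hmβ, Set.disjoint_left.2 fun y hy hyG => hyG.2 β hβ hy⟩
  by_cases hsr : (f s).le r
  · exact hext r hsr (SeqLT.le_refl r)
  by_cases hrs : r.le (f s)
  · exact hext (f s) (SeqLT.le_refl _) hrs
  · exact ⟨r, SeqLT.le_refl r,
      (disjoint_basicOpen_of_not_le hrs hsr).mono_right fun y hy => hy.1⟩

namespace Cardinal.IsRegular

variable {ν : Cardinal.{u}} (hreg : ν.IsRegular) (hpow : Cardinal.powerlt ν ν = ν)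
include hreg hpow

theorem exists_hom_of_comeagerIn {t : SeqLT ν.ord ν.ord} {A : Set (SeqFull ν.ord ν.ord)}
    (hA : ComeagerIn A (basicOpen t)) :
    ∃ f : SeqLT ν.ord ν.ord → SeqLT ν.ord ν.ord,
      IsHom f ∧ IsDenseMap f ∧ IsContinuousMap f ∧
        f (SeqLT.empty ν.ord ν.ord) = t ∧ ∀ x y, FStarVal f x y → y ∈ A := by
  obtain ⟨F, hF, hcover⟩ := hA
  have hnd : ∀ β, IsNowhereDense (if h : β < ν.ord then F ⟨β, h⟩ else ∅) := fun β => by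
    split_ifs with h
    · exact (nowhereDenseIn_iff_of_isOpen (isOpen_basicOpen t) (hF _).1).1 (hF _)
    · exact isNowhereDense_empty
  obtain ⟨f, hhom, hdense, hcont, hf0, hfF⟩ := hreg.exists_hom_avoiding hpow t hnd
  refine ⟨f, hhom, hdense, hcont, hf0, fun x y hxy => ?_⟩
  obtain ⟨hyt, hyF⟩ := hfF x y hxy
  by_contra hyA
  have hy : y ∈ (basicOpen t \ A) ∩ basicOpen t := ⟨⟨hyt, hyA⟩, hyt⟩
  rw [hcover, Set.mem_iUnion] at hy
  obtain ⟨⟨β, hβ⟩, hyβ⟩ := hy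
  exact hyF β hβ (by rwa [dif_pos hβ])

theorem comeagerIn_of_hom {A : Set (SeqFull ν.ord ν.ord)}
    {f : SeqLT ν.ord ν.ord → SeqLT ν.ord ν.ord} (hhom : IsHom f) (hdense : IsDenseMap f)
    (hcont : IsContinuousMap f) (hran : ∀ x y, FStarVal f x y → y ∈ A) :
    ComeagerIn A (basicOpen (f (SeqLT.empty ν.ord ν.ord))) := by
  set B := basicOpen (f (SeqLT.empty ν.ord ν.ord))
  let G (s : SeqLT ν.ord ν.ord) : Set (SeqFull ν.ord ν.ord) :=
    (B \ A) ∩ {y | (f s).prefixOf y ∧ ∀ β, β < ν.ord → ¬ (f (s.snoc β)).prefixOf y}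
  obtain ⟨E, hE⟩ := hreg.exists_enum hpow
  refine ⟨fun i => G (E i), fun i => ?_, ?_⟩
  · refine (nowhereDenseIn_iff_of_isOpen (isOpen_basicOpen _) fun y hy => hy.1.1).2 ?_
    exact (hdense.isNowhereDense hreg.ord_pos (E i)).mono Set.inter_subset_right
  refine Set.Subset.antisymm (fun y hy => ?_) (Set.iUnion_subset fun i => ?_)
  · by_contra hyG
    have hext : ∀ s, (f s).prefixOf y → ∃ β, β < ν.ord ∧ (f (s.snoc β)).prefixOf y := by
      intro s hs
      by_contra! h
      obtain ⟨β, hβ, rfl⟩ := hE s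
      exact hyG (Set.mem_iUnion.2 ⟨⟨β, hβ⟩, hy.1, hs, h⟩)
    obtain ⟨x, hx⟩ := hreg.exists_fStarVal hreg.ord_pos hhom hcont hy.2 hext
    exact hy.1.2 (hran x y hx)
  · exact fun y hy => ⟨hy.1, hy.1.1⟩

end Cardinal.IsRegular

/-- Solovay-style characterization of comeagerness: for an infinite regular cardinal `ν` with
`ν^{<ν} = ν`, a set `A ⊆ ν^ν` is `ν`-comeager in `N_t` iff there is a dense continuous
homomorphism `f : ν^{<ν} → ν^{<ν}` with `f ∅ = t` whose induced map `f*` has range inside `A`. -/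
theorem statement4 (ν : Cardinal.{u}) (hreg : ν.IsRegular)
    (hpow : Cardinal.powerlt ν ν = ν)
    (t : SeqLT ν.ord ν.ord) (A : Set (SeqFull ν.ord ν.ord)) :
    ComeagerIn A (basicOpen t) ↔
      ∃ f : SeqLT ν.ord ν.ord → SeqLT ν.ord ν.ord,
        IsHom f ∧ IsDenseMap f ∧ IsContinuousMap f ∧
          f (SeqLT.empty ν.ord ν.ord) = t ∧ ∀ x y, FStarVal f x y → y ∈ A := by
  refine ⟨hreg.exists_hom_of_comeagerIn hpow, ?_⟩
  rintro ⟨f, hhom, hdense, hcont, rfl, hran⟩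
  exact hreg.comeagerIn_of_hom hpow hhom hdense hcont hran

end
end
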